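/- arXiv:1207.2008 — 3 statements merged into one kernel-verified Lean document; each statement's English description precedes it below -/
import Mathlib

section
/- Let a,b,c,d range over ℕ∪{∅}. For every n ≥ 1, every choice of parameters a,b,c,d ∈ ℕ∪{∅} and every k ∈ ℕ, the number of up-down permutations σ of length 2n−1 with mmp^{(a,b,c,d)}(σ) = k equals the number of up-down permutations σ of length 2n−1 with mmp^{(b,a,d,c)}(σ) = k, equals the number of down-up permutations τ of length 2n−1 with mmp^{(d,c,b,a)}(τ) = k, and equals the number of down-up permutations τ of length 2n−1 with mmp^{(c,d,a,b)}(τ) = k. (Equivalently, B^{(a,b,c,d)}_{2n−1}(x) = B^{(b,a,d,c)}_{2n−1}(x) = D^{(d,c,b,a)}_{2n−1}(x) = D^{(c,d,a,b)}_{2n−1}(x).) -/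
/-- A permutation `σ` of `{1,…,n}` (as a permutation of `Fin n`) is up-down if
`σ_1 < σ_2 > σ_3 < σ_4 > ⋯`. -/
def UpDown {n : ℕ} (σ : Equiv.Perm (Fin n)) : Prop :=
  ∀ i : Fin n, ∀ h : i.val + 1 < n,
    if Even i.val then σ i < σ ⟨i.val + 1, h⟩ else σ ⟨i.val + 1, h⟩ < σ i

/-- A permutation is down-up if `σ_1 > σ_2 < σ_3 > σ_4 < ⋯`. -/
def DownUp {n : ℕ} (σ : Equiv.Perm (Fin n)) : Prop :=
  ∀ i : Fin n, ∀ h : i.val + 1 < n,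
    if Even i.val then σ ⟨i.val + 1, h⟩ < σ i else σ i < σ ⟨i.val + 1, h⟩

/-- The condition placed on the number `c` of points in a quadrant by a parameter
`p ∈ ℕ ∪ {∅}` (here `none` plays the role of `∅`): `c ≥ a` if `p = some a`,
and `c = 0` if `p = none`. -/
def QuadOK : Option ℕ → ℕ → Prop
  | some a, c => a ≤ c
  | none, c => c = 0

/-- `σ_i` matches the quadrant marked mesh pattern `MMP(a,b,c,d)` in `σ`. -/
def MatchesMMP (a b c d : Option ℕ) {n : ℕ} (σ : Equiv.Perm (Fin n)) (i : Fin n) : Prop :=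
  QuadOK a {j : Fin n | i < j ∧ σ i < σ j}.ncard ∧
  QuadOK b {j : Fin n | j < i ∧ σ i < σ j}.ncard ∧
  QuadOK c {j : Fin n | j < i ∧ σ j < σ i}.ncard ∧
  QuadOK d {j : Fin n | i < j ∧ σ j < σ i}.ncard

/-- `mmp^{(a,b,c,d)}(σ)`: the number of indices `i` such that `σ_i` matches
`MMP(a,b,c,d)` in `σ`. -/
noncomputable def mmp (a b c d : Option ℕ) {n : ℕ} (σ : Equiv.Perm (Fin n)) : ℕ :=
  {i : Fin n | MatchesMMP a b c d σ i}.ncard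

/-!
Two symmetries of permutations do the work. Reversing positions, `σ ↦ σ ∘ rev`, keeps an
up-down permutation of odd length up-down, and it exchanges the quadrants to the right with
those to the left, so that `MMP(a,b,c,d)` becomes `MMP(b,a,d,c)`. Complementing values,
`σ ↦ rev ∘ σ`, exchanges up-down and down-up permutations of any length and exchanges the
quadrants above with those below, so that `MMP(a,b,c,d)` becomes `MMP(d,c,b,a)`. Both are
bijections, and their composite gives the last equality.
-/

open Equiv

lemma Set.ncard_setOf_eq_of_equiv {α β : Type*} (e : α ≃ β) {P : α → Prop} {Q : β → Prop}
    (h : ∀ x, P x ↔ Q (e x)) : {x | P x}.ncard = {y | Q y}.ncard := by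
  rw [show {x | P x} = e ⁻¹' {y | Q y} from Set.ext h]
  exact Set.ncard_preimage_of_injective_subset_range e.injective (by simp)

namespace Fin

variable {m : ℕ}

lemma even_val_rev (hm : Odd m) (i : Fin m) : Even (rev i).val ↔ Even i.val := by
  have hi := i.isLt
  obtain ⟨t, rfl⟩ := hm
  rw [val_rev, show 2 * t + 1 - (i.val + 1) = 2 * t - i.val by omega,
    Nat.even_sub (by omega)]
  simp

lemma ncard_gt_and_rev (i : Fin m) (q : Fin m → Prop) :
    {j | i < j ∧ q (rev j)}.ncard = {j | j < rev i ∧ q j}.ncard :=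
  Set.ncard_setOf_eq_of_equiv revPerm fun j => by simp [rev_lt_rev]

lemma ncard_lt_and_rev (i : Fin m) (q : Fin m → Prop) :
    {j | j < i ∧ q (rev j)}.ncard = {j | rev i < j ∧ q j}.ncard :=
  Set.ncard_setOf_eq_of_equiv revPerm fun j => by simp [rev_lt_rev]

end Fin

section Symmetries

variable {m : ℕ}

open Fin

lemma upDown_iff {σ : Perm (Fin m)} :
    UpDown σ ↔ ∀ i j : Fin m, i.val + 1 = j.val →
      if Even i.val then σ i < σ j else σ j < σ i := by
  refine ⟨fun h i j hij => ?_, fun h i hi => h i _ rfl⟩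
  obtain ⟨j, hj⟩ := j
  subst hij
  exact h i hj

lemma UpDown.mul_revPerm (hm : Odd m) {σ : Perm (Fin m)} (hσ : UpDown σ) :
    UpDown (σ * revPerm) := by
  rw [upDown_iff] at hσ ⊢
  intro i j hij
  have hji : (rev j).val + 1 = (rev i).val := by
    simp only [val_rev]
    omega
  have key := hσ _ _ hji
  simp only [even_val_rev hm, ← hij, Nat.even_add_one] at key
  simp only [Perm.mul_apply, revPerm_apply]
  by_cases hi : Even i.val <;> simp_all

lemma upDown_mul_revPerm_iff (hm : Odd m) {σ : Perm (Fin m)} :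
    UpDown (σ * revPerm) ↔ UpDown σ := by
  refine ⟨fun h => ?_, UpDown.mul_revPerm hm⟩
  have hinv : (revPerm : Perm (Fin m)) * revPerm = 1 := by
    ext
    simp
  simpa [mul_assoc, hinv] using h.mul_revPerm hm

lemma downUp_revPerm_mul_iff {σ : Perm (Fin m)} : DownUp (revPerm * σ) ↔ UpDown σ := by
  simp only [DownUp, UpDown, Perm.mul_apply, revPerm_apply, rev_lt_rev]

lemma matchesMMP_mul_revPerm_iff (a b c d : Option ℕ) (σ : Perm (Fin m)) (i : Fin m) :
    MatchesMMP a b c d (σ * revPerm) i ↔ MatchesMMP b a d c σ (rev i) := by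
  simp only [MatchesMMP, Perm.mul_apply, revPerm_apply]
  rw [ncard_gt_and_rev i (σ (rev i) < σ ·), ncard_lt_and_rev i (σ (rev i) < σ ·),
    ncard_lt_and_rev i (σ · < σ (rev i)), ncard_gt_and_rev i (σ · < σ (rev i))]
  tauto

lemma mmp_mul_revPerm (a b c d : Option ℕ) (σ : Perm (Fin m)) :
    mmp a b c d (σ * revPerm) = mmp b a d c σ :=
  Set.ncard_setOf_eq_of_equiv revPerm fun i => matchesMMP_mul_revPerm_iff a b c d σ i

lemma matchesMMP_revPerm_mul_iff (a b c d : Option ℕ) (σ : Perm (Fin m)) (i : Fin m) :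
    MatchesMMP a b c d (revPerm * σ) i ↔ MatchesMMP d c b a σ i := by
  simp only [MatchesMMP, Perm.mul_apply, revPerm_apply, rev_lt_rev]
  tauto

lemma mmp_revPerm_mul (a b c d : Option ℕ) (σ : Perm (Fin m)) :
    mmp a b c d (revPerm * σ) = mmp d c b a σ :=
  congrArg Set.ncard (Set.ext fun i => matchesMMP_revPerm_mul_iff a b c d σ i)

lemma ncard_upDown_mmp_eq_swap (hm : Odd m) (a b c d : Option ℕ) (k : ℕ) :
    {σ : Perm (Fin m) | UpDown σ ∧ mmp a b c d σ = k}.ncard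
      = {σ : Perm (Fin m) | UpDown σ ∧ mmp b a d c σ = k}.ncard :=
  Set.ncard_setOf_eq_of_equiv (Equiv.mulRight revPerm) fun σ => by
    simp [upDown_mul_revPerm_iff hm, mmp_mul_revPerm]

lemma ncard_upDown_mmp_eq_ncard_downUp (a b c d : Option ℕ) (k : ℕ) :
    {σ : Perm (Fin m) | UpDown σ ∧ mmp a b c d σ = k}.ncard
      = {τ : Perm (Fin m) | DownUp τ ∧ mmp d c b a τ = k}.ncard :=
  Set.ncard_setOf_eq_of_equiv (Equiv.mulLeft revPerm) fun σ => by
    simp [downUp_revPerm_mul_iff, mmp_revPerm_mul]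

end Symmetries

theorem stmt1 (n : ℕ) (hn : 1 ≤ n) (a b c d : Option ℕ) (k : ℕ) :
    {σ : Equiv.Perm (Fin (2*n - 1)) | UpDown σ ∧ mmp a b c d σ = k}.ncard
      = {σ : Equiv.Perm (Fin (2*n - 1)) | UpDown σ ∧ mmp b a d c σ = k}.ncard ∧
    {σ : Equiv.Perm (Fin (2*n - 1)) | UpDown σ ∧ mmp a b c d σ = k}.ncard
      = {τ : Equiv.Perm (Fin (2*n - 1)) | DownUp τ ∧ mmp d c b a τ = k}.ncard ∧
    {σ : Equiv.Perm (Fin (2*n - 1)) | UpDown σ ∧ mmp a b c d σ = k}.ncard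
      = {τ : Equiv.Perm (Fin (2*n - 1)) | DownUp τ ∧ mmp c d a b τ = k}.ncard := by
  have hm : Odd (2 * n - 1) := ⟨n - 1, by omega⟩
  have hswap := ncard_upDown_mmp_eq_swap hm a b c d k
  exact ⟨hswap, ncard_upDown_mmp_eq_ncard_downUp a b c d k,
    hswap.trans (ncard_upDown_mmp_eq_ncard_downUp b a d c k)⟩
end

section
/- For every n ≥ 2: every down-up permutation σ of length 2n satisfies mmp^{(1,0,∅,0)}(σ) ≤ n, and the number of down-up permutations σ of length 2n with mmp^{(1,0,∅,0)}(σ) = n equals (2n²−n−1)·(2n−4)!! − n·(2n−3)!!. (Equivalently, the highest power of x appearing in C^{(1,0,∅,0)}_{2n}(x) is x^n, with coefficient (2n²−n−1)((2n−4)!!) − n((2n−3)!!).) -/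
/-- `σ_i` matches `MMP(1,0,∅,0)`: there exists `j > i` with `σ_j > σ_i` and
there is no `j < i` with `σ_j < σ_i`. -/
def Matches1 {n : ℕ} (σ : Equiv.Perm (Fin n)) (i : Fin n) : Prop :=
  (∃ j, i < j ∧ σ i < σ j) ∧ ¬ ∃ j, j < i ∧ σ j < σ i

/-- `mmp^{(1,0,∅,0)}(σ)`: the number of indices matching `MMP(1,0,∅,0)` in `σ`. -/
noncomputable def mmp1 {n : ℕ} (σ : Equiv.Perm (Fin n)) : ℕ :=
  {i : Fin n | Matches1 σ i}.ncard

/-- The odd double factorial `(2n−1)!! = ∏_{i=1}^{n} (2i−1)`. -/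
def oddDF (n : ℕ) : ℕ := ∏ i ∈ Finset.range n, (2*i+1)

/-- The even double factorial `(2n)!! = ∏_{i=1}^{n} 2i`. -/
def evenDF (n : ℕ) : ℕ := ∏ i ∈ Finset.range n, (2*i+2)

/-!
In a down-up permutation an entry at an even position `i ≥ 2` (positions counted from `0`) has a
smaller left neighbour, and the last entry has nothing to its right; so only position `0` and the
odd positions before the last one can match `MMP(1,0,∅,0)`, which gives at most `n` matches.
An odd position `j < 2n - 1` always has a larger right neighbour, so `mmp = n` says exactly that
every such position carries a left-to-right minimum and that `σ₀` is not the maximum.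

Such sequences are counted on an arbitrary set of values `V` by peeling entries off the end. When
`|V|` is odd, the minimum of `V` must sit in the second-to-last place, followed by any other value:
this gives `(|V| - 1)!!` sequences, and `(|V| - 2)!!` of them when the maximum is required to stay
in front. When `|V|` is even, the last entry is either the minimum of `V`, or it is preceded by the
minimum and a larger entry. Subtracting the sequences that start with the maximum gives the formula.
-/

lemma List.forall_mem_iff_forall_getD {α : Type*} {l : List α} {d : α} {p : α → Prop} :
    (∀ y ∈ l, p y) ↔ ∀ i < l.length, p (l.getD i d) := by
  simp +contextual [List.forall_mem_iff_getElem]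

lemma List.exists_eq_append_pair {α : Type*} {l : List α} (h : 2 ≤ l.length) :
    ∃ l' a b, l = l' ++ [a, b] := by
  have h2 : (l.drop (l.length - 2)).length = 2 := by simp; omega
  obtain ⟨a, b, hab⟩ := List.length_eq_two.1 h2
  exact ⟨l.take (l.length - 2), a, b, by rw [← hab, List.take_append_drop]⟩

lemma List.nodup_toFinset_eq_append_iff {α : Type*} [DecidableEq α] {l s : List α}
    {V : Finset α} :
    ((l ++ s).Nodup ∧ (l ++ s).toFinset = V) ↔
      (l.Nodup ∧ l.toFinset = V \ s.toFinset) ∧ s.Nodup ∧ s.toFinset ⊆ V := by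
  rw [List.nodup_append, List.toFinset_append]
  constructor
  · rintro ⟨⟨hl, hs, hdisj⟩, rfl⟩
    refine ⟨⟨hl, ?_⟩, hs, Finset.subset_union_right⟩
    ext x
    simp only [Finset.mem_sdiff, Finset.mem_union, List.mem_toFinset]
    exact ⟨fun hx => ⟨Or.inl hx, fun hxs => hdisj x hx x hxs rfl⟩,
      fun h => h.1.resolve_right h.2⟩
  · rintro ⟨⟨hl, hlV⟩, hs, hsV⟩
    refine ⟨⟨hl, hs, fun a ha b hb hab => ?_⟩, by rw [hlV, Finset.sdiff_union_of_subset hsV]⟩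
    have : a ∈ V \ s.toFinset := hlV ▸ List.mem_toFinset.2 ha
    exact (Finset.mem_sdiff.1 this).2 (List.mem_toFinset.2 (hab ▸ hb))

lemma List.card_sdiff_toFinset {α : Type*} [DecidableEq α] {V : Finset α} {s : List α}
    (hs : s.Nodup) (hsV : s.toFinset ⊆ V) : (V \ s.toFinset).card = V.card - s.length := by
  rw [Finset.card_sdiff_of_subset hsV, List.toFinset_card_of_nodup hs]

lemma List.ncard_biUnion_image_append {α : Type*} {X : Finset (List α)}
    (hX : ∀ s ∈ X, ∀ t ∈ X, s <:+ t → s = t) {F : List α → Set (List α)}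
    (hF : ∀ s ∈ X, (F s).Finite) :
    (⋃ s ∈ X, (· ++ s) '' F s).ncard = ∑ s ∈ X, (F s).ncard := by
  rw [← Finset.set_biUnion_coe,
    Set.Finite.ncard_biUnion X.finite_toSet (fun s hs => (hF s hs).image _),
    finsum_mem_coe_finset]
  · exact Finset.sum_congr rfl fun s _ =>
      Set.ncard_image_of_injective _ (List.append_left_injective s)
  · intro s hs t ht hst
    rw [Function.onFun, Set.disjoint_left]
    rintro _ ⟨l, -, rfl⟩ ⟨l', -, h⟩
    have h : l' ++ t = l ++ s := h
    have hsuf : t <:+ l ++ s := h ▸ List.suffix_append l' t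
    rcases List.suffix_or_suffix_of_suffix (List.suffix_append l s) hsuf with h' | h'
    · exact hst (hX s hs t ht h')
    · exact hst (hX t ht s hs h').symm

lemma evenDF_succ (m : ℕ) : evenDF (m + 1) = evenDF m * (2 * m + 2) :=
  Finset.prod_range_succ _ _

lemma oddDF_succ (m : ℕ) : oddDF (m + 1) = oddDF m * (2 * m + 1) :=
  Finset.prod_range_succ _ _

def IsDownUpList (l : List ℕ) : Prop :=
  ∀ i, i + 1 < l.length →
    if Even i then l.getD (i + 1) 0 < l.getD i 0 else l.getD i 0 < l.getD (i + 1) 0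

/-- Positions are counted from `0`, so the odd positions are the paper's `σ₂, σ₄, …`. -/
def HasLRMinAtOdd (l : List ℕ) : Prop :=
  ∀ j, Odd j → j + 1 < l.length → ∀ i < j, l.getD j 0 < l.getD i 0

def DownUpOddMin (l : List ℕ) : Prop := IsDownUpList l ∧ HasLRMinAtOdd l

namespace DownUpOddMin

lemma append_pair_iff {l : List ℕ} (hl : Odd l.length) {a b : ℕ} :
    DownUpOddMin (l ++ [a, b]) ↔ DownUpOddMin l ∧ (∀ y ∈ l, a < y) ∧ a < b := by
  obtain ⟨r, hr⟩ := hl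
  have hL : ∀ i < l.length, (l ++ [a, b]).getD i 0 = l.getD i 0 :=
    fun i hi => List.getD_append _ _ _ _ hi
  have ha : (l ++ [a, b]).getD l.length 0 = a := by simp
  have hb : (l ++ [a, b]).getD (l.length + 1) 0 = b := by simp
  rw [List.forall_mem_iff_forall_getD]
  simp only [DownUpOddMin, IsDownUpList, HasLRMinAtOdd, List.length_append, List.length_cons,
    List.length_nil]
  constructor
  · rintro ⟨hdu, hmin⟩
    refine ⟨⟨fun i hi => ?_, fun j hj hjl i hij => ?_⟩, fun i hi => ?_, ?_⟩
    · simpa only [hL i (by omega), hL (i + 1) hi] using hdu i (by omega)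
    · simpa only [hL i (by omega), hL j (by omega)] using hmin j hj (by omega) i hij
    · simpa only [ha, hL i hi] using hmin l.length ⟨r, hr⟩ (by omega) i hi
    · simpa [ha, hb, hr, Nat.even_add_one] using hdu l.length (by omega)
  · rintro ⟨⟨hdu, hmin⟩, hlt, hab⟩
    refine ⟨fun i hi => ?_, fun j hj hjl i hij => ?_⟩
    · rcases lt_trichotomy (i + 1) l.length with h | h | h
      · simpa only [hL i (by omega), hL (i + 1) h] using hdu i h
      · have hi : Even i := ⟨r, by omega⟩
        simpa only [if_pos hi, h, ha, hL i (by omega)] using hlt i (by omega)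
      · obtain rfl : i = l.length := by omega
        simpa [ha, hb, hr, Nat.even_add_one] using hab
    · rcases lt_trichotomy j l.length with h | rfl | h
      · have hj1 : j + 1 < l.length := by obtain ⟨s, rfl⟩ := hj; omega
        simpa only [hL i (by omega), hL j h] using hmin j hj hj1 i hij
      · simpa only [ha, hL i hij] using hlt i hij
      · obtain ⟨s, rfl⟩ := hj
        omega

lemma append_singleton_iff {l : List ℕ} (hl : Odd l.length) {c : ℕ} :
    DownUpOddMin (l ++ [c]) ↔ DownUpOddMin l ∧ c < l.getD (l.length - 1) 0 := by
  obtain ⟨r, hr⟩ := hl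
  have hL : ∀ i < l.length, (l ++ [c]).getD i 0 = l.getD i 0 :=
    fun i hi => List.getD_append _ _ _ _ hi
  have hc : (l ++ [c]).getD l.length 0 = c := by simp
  have hlast : Even (l.length - 1) := ⟨r, by omega⟩
  simp only [DownUpOddMin, IsDownUpList, HasLRMinAtOdd, List.length_append, List.length_cons,
    List.length_nil]
  constructor
  · rintro ⟨hdu, hmin⟩
    refine ⟨⟨fun i hi => ?_, fun j hj hjl i hij => ?_⟩, ?_⟩
    · simpa only [hL i (by omega), hL (i + 1) hi] using hdu i (by omega)
    · simpa only [hL i (by omega), hL j (by omega)] using hmin j hj (by omega) i hij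
    · have := hdu (l.length - 1) (by omega)
      rwa [if_pos hlast, Nat.sub_add_cancel (by omega), hc, hL _ (by omega)] at this
  · rintro ⟨⟨hdu, hmin⟩, hcl⟩
    refine ⟨fun i hi => ?_, fun j hj hjl i hij => ?_⟩
    · rcases lt_or_eq_of_le (Nat.le_of_lt_succ hi) with h | h
      · simpa only [hL i (by omega), hL (i + 1) h] using hdu i h
      · obtain rfl : i = l.length - 1 := by omega
        rwa [if_pos hlast, h, hc, hL _ (by omega)]
    · have hj1 : j + 1 < l.length := by obtain ⟨s, rfl⟩ := hj; omega
      simpa only [hL i (by omega), hL j (by omega)] using hmin j hj hj1 i hij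

def lists (V : Finset ℕ) : Set (List ℕ) := {l | l.Nodup ∧ l.toFinset = V ∧ DownUpOddMin l}

def topLists (V : Finset ℕ) : Set (List ℕ) := {l | l ∈ lists V ∧ ∀ y ∈ V, y ≤ l.getD 0 0}

lemma length_eq_card {V : Finset ℕ} {l : List ℕ} (hl : l ∈ lists V) : l.length = V.card := by
  rw [← hl.2.1, List.toFinset_card_of_nodup hl.1]

lemma mem_of_mem_lists {V : Finset ℕ} {l : List ℕ} (hl : l ∈ lists V) {y : ℕ} (hy : y ∈ l) :
    y ∈ V :=
  hl.2.1 ▸ List.mem_toFinset.2 hy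

lemma finite_lists (V : Finset ℕ) : (lists V).Finite :=
  V.toList.permutations.toFinset.finite_toSet.subset fun l hl => by
    simpa [List.mem_permutations] using List.perm_of_nodup_nodup_toFinset_eq hl.1
      V.nodup_toList (by rw [hl.2.1, Finset.toList_toFinset])

lemma finite_topLists (V : Finset ℕ) : (topLists V).Finite :=
  (finite_lists V).subset fun _ hl => hl.1

lemma append_pair_mem_lists_iff {V : Finset ℕ} {l : List ℕ} (hl : Odd l.length) {a b : ℕ} :
    l ++ [a, b] ∈ lists V ↔
      l ∈ lists (V \ {a, b}) ∧ a ∈ V ∧ b ∈ V ∧ (∀ y ∈ l, a < y) ∧ a < b := by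
  simp only [lists, Set.mem_ofPred_eq]
  rw [← and_assoc, List.nodup_toFinset_eq_append_iff, append_pair_iff hl]
  simp only [List.nodup_cons, List.mem_singleton, List.not_mem_nil, not_false_eq_true,
    List.nodup_nil, and_true, List.toFinset_cons, List.toFinset_nil, insert_empty_eq,
    Finset.insert_subset_iff, Finset.singleton_subset_iff]
  constructor
  · rintro ⟨⟨⟨hl, hV⟩, -, ha, hb⟩, hd, hy, hab⟩
    exact ⟨⟨hl, hV, hd⟩, ha, hb, hy, hab⟩
  · rintro ⟨⟨hl, hV, hd⟩, ha, hb, hy, hab⟩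
    exact ⟨⟨⟨hl, hV⟩, hab.ne, ha, hb⟩, hd, hy, hab⟩

lemma append_singleton_mem_lists_iff {V : Finset ℕ} {l : List ℕ} (hl : Odd l.length) {c : ℕ} :
    l ++ [c] ∈ lists V ↔ l ∈ lists (V \ {c}) ∧ c ∈ V ∧ c < l.getD (l.length - 1) 0 := by
  simp only [lists, Set.mem_ofPred_eq]
  rw [← and_assoc, List.nodup_toFinset_eq_append_iff, append_singleton_iff hl]
  simp only [List.nodup_singleton, List.toFinset_cons, List.toFinset_nil, insert_empty_eq,
    Finset.singleton_subset_iff, true_and]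
  tauto

lemma card_sdiff_pair_suffix {V : Finset ℕ} {μ x : ℕ} (hμ : μ ∈ V) (hx : x ∈ V.erase μ) :
    (V \ [μ, x].toFinset).card = V.card - 2 := by
  obtain ⟨hxμ, hxV⟩ := Finset.mem_erase.1 hx
  exact List.card_sdiff_toFinset (by simpa using Ne.symm hxμ)
    (by simpa [Finset.insert_subset_iff, hxV] using hμ)

lemma card_sdiff_triple_suffix {V : Finset ℕ} {μ x c : ℕ} (hμ : μ ∈ V) (hx : x ∈ V.erase μ)
    (hc : c ∈ V.erase μ) (hcx : c < x) : (V \ [μ, x, c].toFinset).card = V.card - 3 := by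
  obtain ⟨hxμ, hxV⟩ := Finset.mem_erase.1 hx
  obtain ⟨hcμ, hcV⟩ := Finset.mem_erase.1 hc
  exact List.card_sdiff_toFinset (by simp [Ne.symm hxμ, Ne.symm hcμ, hcx.ne'])
    (by simpa [Finset.insert_subset_iff, hxV, hcV] using hμ)

lemma mem_lists_iff_of_odd {V : Finset ℕ} {μ : ℕ} (hμ : IsLeast (V : Set ℕ) μ)
    (hV : Odd V.card) (h3 : 3 ≤ V.card) {l : List ℕ} :
    l ∈ lists V ↔ ∃ x ∈ V.erase μ, ∃ l' ∈ lists (V \ {μ, x}), l = l' ++ [μ, x] := by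
  obtain ⟨r, hr⟩ := hV
  constructor
  · intro hl
    obtain ⟨l', a, b, rfl⟩ := List.exists_eq_append_pair (by rw [length_eq_card hl]; omega)
    have hodd : Odd l'.length := by
      have := length_eq_card hl
      simp only [List.length_append, List.length_cons, List.length_nil] at this
      exact ⟨r - 1, by omega⟩
    obtain ⟨hl', ha, hb, hlt, hab⟩ := (append_pair_mem_lists_iff hodd).1 hl
    obtain rfl : a = μ := by
      by_contra hne
      have hμ' : μ ∈ V \ {a, b} := by
        simp only [Finset.mem_sdiff, Finset.mem_insert, Finset.mem_singleton, not_or]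
        exact ⟨hμ.1, Ne.symm hne, fun h => (hab.trans_le (h ▸ hμ.2 ha)).false⟩
      rw [← hl'.2.1, List.mem_toFinset] at hμ'
      exact (hlt μ hμ').not_ge (hμ.2 ha)
    exact ⟨b, Finset.mem_erase.2 ⟨hab.ne', hb⟩, l', hl', rfl⟩
  · rintro ⟨x, hx, l', hl', rfl⟩
    obtain ⟨hxμ, hxV⟩ := Finset.mem_erase.1 hx
    have hodd : Odd l'.length := by
      have := card_sdiff_pair_suffix hμ.1 hx
      simp only [List.toFinset_cons, List.toFinset_nil, insert_empty_eq] at this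
      rw [length_eq_card hl', this]
      exact ⟨r - 1, by omega⟩
    refine (append_pair_mem_lists_iff hodd).2 ⟨hl', hμ.1, hxV, fun y hy => ?_,
      lt_of_le_of_ne (hμ.2 hxV) (Ne.symm hxμ)⟩
    have hy' := Finset.mem_sdiff.1 (mem_of_mem_lists hl' hy)
    exact lt_of_le_of_ne (hμ.2 hy'.1) fun h => hy'.2 (by simp [h])

lemma card_sdiff_singleton {V : Finset ℕ} {c : ℕ} (hc : c ∈ V) : (V \ {c}).card = V.card - 1 := by
  rw [Finset.sdiff_singleton_eq_erase, Finset.card_erase_of_mem hc]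

lemma odd_length_of_append_singleton_mem_lists {V : Finset ℕ} (hV : Even V.card) {l : List ℕ}
    {c : ℕ} (hl : l ++ [c] ∈ lists V) : Odd l.length := by
  have := length_eq_card hl
  rw [List.length_append, List.length_singleton] at this
  obtain ⟨r, hr⟩ := hV
  exact ⟨r - 1, by omega⟩

lemma odd_card_sdiff_singleton {V : Finset ℕ} (hV : Even V.card) {c : ℕ} (hc : c ∈ V) :
    Odd (V \ {c}).card := by
  have := Finset.card_pos.2 ⟨c, hc⟩
  rw [card_sdiff_singleton hc]
  obtain ⟨r, hr⟩ := hV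
  exact ⟨r - 1, by omega⟩

lemma append_least_mem_lists_iff {V : Finset ℕ} {μ : ℕ} (hμ : IsLeast (V : Set ℕ) μ)
    (hV : Even V.card) (h2 : 2 ≤ V.card) {l : List ℕ} :
    l ++ [μ] ∈ lists V ↔ l ∈ lists (V \ {μ}) := by
  refine ⟨fun h => ((append_singleton_mem_lists_iff
    (odd_length_of_append_singleton_mem_lists hV h)).1 h).1, fun hl => ?_⟩
  have hodd : Odd l.length := length_eq_card hl ▸ odd_card_sdiff_singleton hV hμ.1
  have hlen : 0 < l.length := by rw [length_eq_card hl, card_sdiff_singleton hμ.1]; omega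
  refine (append_singleton_mem_lists_iff hodd).2 ⟨hl, hμ.1, ?_⟩
  have hlast := Finset.mem_sdiff.1 <| mem_of_mem_lists hl <|
    List.getD_eq_getElem l 0 (n := l.length - 1) (by omega) ▸ List.getElem_mem (by omega)
  exact lt_of_le_of_ne (hμ.2 hlast.1) fun h => hlast.2 (by simp [h])

lemma append_mem_lists_iff_of_ne_least {V : Finset ℕ} {μ : ℕ} (hμ : IsLeast (V : Set ℕ) μ)
    (hV : Even V.card) (h4 : 4 ≤ V.card) {c : ℕ} (hc : c ∈ V.erase μ) {l : List ℕ} :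
    l ++ [c] ∈ lists V ↔
      ∃ x ∈ V.erase μ, c < x ∧ ∃ l' ∈ lists (V \ {μ, x, c}), l = l' ++ [μ, x] := by
  obtain ⟨hcμ, hcV⟩ := Finset.mem_erase.1 hc
  have hset : ∀ x, (V \ {c}) \ {μ, x} = V \ {μ, x, c} := fun x => by
    ext; simp only [Finset.mem_sdiff, Finset.mem_insert, Finset.mem_singleton]; tauto
  have hleast : IsLeast (↑(V \ {c}) : Set ℕ) μ :=
    ⟨by simpa using ⟨hμ.1, Ne.symm hcμ⟩, fun y hy => hμ.2 (Finset.mem_sdiff.1 hy).1⟩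
  have hodd := fun l => mem_lists_iff_of_odd (l := l) hleast (odd_card_sdiff_singleton hV hcV)
    (by rw [card_sdiff_singleton hcV]; omega)
  constructor
  · intro h
    obtain ⟨hl, -, hclt⟩ :=
      (append_singleton_mem_lists_iff (odd_length_of_append_singleton_mem_lists hV h)).1 h
    obtain ⟨x, hx, l', hl', rfl⟩ := (hodd _).1 hl
    obtain ⟨hxμ, hxV⟩ := Finset.mem_erase.1 hx
    exact ⟨x, Finset.mem_erase.2 ⟨hxμ, (Finset.mem_sdiff.1 hxV).1⟩, by simpa using hclt, l',
      hset x ▸ hl', rfl⟩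
  · rintro ⟨x, hx, hcx, l', hl', rfl⟩
    obtain ⟨hxμ, hxV⟩ := Finset.mem_erase.1 hx
    have hl : l' ++ [μ, x] ∈ lists (V \ {c}) :=
      (hodd _).2 ⟨x, by simpa using ⟨hxμ, hxV, hcx.ne'⟩, l', (hset x).symm ▸ hl', rfl⟩
    exact (append_singleton_mem_lists_iff (length_eq_card hl ▸ odd_card_sdiff_singleton hV hcV)).2
      ⟨hl, hcV, by simpa using hcx⟩

lemma mem_lists_iff_of_even {V : Finset ℕ} {μ : ℕ} (hμ : IsLeast (V : Set ℕ) μ)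
    (hV : Even V.card) (h4 : 4 ≤ V.card) {l : List ℕ} :
    l ∈ lists V ↔ (∃ l' ∈ lists (V \ {μ}), l = l' ++ [μ]) ∨
      ∃ c ∈ V.erase μ, ∃ x ∈ V.erase μ, c < x ∧
        ∃ l' ∈ lists (V \ {μ, x, c}), l = l' ++ [μ, x, c] := by
  constructor
  · intro hl
    have hne : l ≠ [] := by rintro rfl; have := length_eq_card hl; simp at this; omega
    obtain ⟨l₁, c, rfl⟩ : ∃ l₁ c, l = l₁ ++ [c] :=
      ⟨l.dropLast, l.getLast hne, (List.dropLast_append_getLast hne).symm⟩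
    have hcV : c ∈ V := mem_of_mem_lists hl (by simp)
    by_cases hcμ : c = μ
    · subst hcμ
      exact Or.inl ⟨l₁, (append_least_mem_lists_iff hμ hV (by omega)).1 hl, rfl⟩
    have hc : c ∈ V.erase μ := Finset.mem_erase.2 ⟨hcμ, hcV⟩
    obtain ⟨x, hx, hcx, l', hl', rfl⟩ := (append_mem_lists_iff_of_ne_least hμ hV h4 hc).1 hl
    exact Or.inr ⟨c, hc, x, hx, hcx, l', hl', by simp⟩
  · rintro (⟨l', hl', rfl⟩ | ⟨c, hc, x, hx, hcx, l', hl', rfl⟩)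
    · exact (append_least_mem_lists_iff hμ hV (by omega)).2 hl'
    · simpa using (append_mem_lists_iff_of_ne_least hμ hV h4 hc).2 ⟨x, hx, hcx, l', hl', rfl⟩

lemma lists_singleton (a : ℕ) : lists {a} = {[a]} := by
  ext l
  simp only [Set.mem_singleton_iff]
  constructor
  · intro hl
    obtain ⟨y, rfl⟩ :=
      List.length_eq_one_iff.1 ((length_eq_card hl).trans (Finset.card_singleton a))
    simpa using hl.2.1
  · rintro rfl
    exact ⟨List.nodup_singleton a, by simp, fun i hi => by simp at hi, fun j _ hj => by simp at hj⟩

lemma topLists_singleton (a : ℕ) : topLists {a} = {[a]} := by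
  ext l
  simp only [topLists, lists_singleton, Set.mem_ofPred_eq, Set.mem_singleton_iff]
  exact ⟨fun h => h.1, by rintro rfl; simp⟩

def oddSuffixes (μ : ℕ) (F : Finset ℕ) : Finset (List ℕ) := F.image fun x => [μ, x]

def evenSuffixes (μ : ℕ) (F : Finset ℕ) : Finset (List ℕ) :=
  insert [μ] ({p ∈ F ×ˢ F | p.1 < p.2}.image fun p => [μ, p.2, p.1])

lemma lists_eq_biUnion_of_odd {V : Finset ℕ} {μ : ℕ} (hμ : IsLeast (V : Set ℕ) μ)
    (hV : Odd V.card) (h3 : 3 ≤ V.card) :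
    lists V = ⋃ s ∈ oddSuffixes μ (V.erase μ), (· ++ s) '' lists (V \ s.toFinset) := by
  ext l
  simp [oddSuffixes, mem_lists_iff_of_odd hμ hV h3, eq_comm]

lemma lists_eq_biUnion_of_even {V : Finset ℕ} {μ : ℕ} (hμ : IsLeast (V : Set ℕ) μ)
    (hV : Even V.card) (h4 : 4 ≤ V.card) :
    lists V = ⋃ s ∈ evenSuffixes μ (V.erase μ), (· ++ s) '' lists (V \ s.toFinset) := by
  ext l
  rw [mem_lists_iff_of_even hμ hV h4]
  simp only [evenSuffixes, Set.mem_iUnion, Set.mem_image, Finset.mem_insert, Finset.mem_image,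
    Finset.mem_filter, Finset.mem_product, exists_prop, Prod.exists]
  constructor
  · rintro (⟨l', hl', rfl⟩ | ⟨c, hc, x, hx, hcx, l', hl', rfl⟩)
    · exact ⟨[μ], Or.inl rfl, l', by simpa using hl', rfl⟩
    · exact ⟨[μ, x, c], Or.inr ⟨c, x, ⟨⟨hc, hx⟩, hcx⟩, rfl⟩, l', by simpa using hl', rfl⟩
  · rintro ⟨_, rfl | ⟨c, x, ⟨⟨hc, hx⟩, hcx⟩, rfl⟩, l', hl', rfl⟩
    · exact Or.inl ⟨l', by simpa using hl', rfl⟩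
    · exact Or.inr ⟨c, hc, x, hx, hcx, l', by simpa using hl', rfl⟩

/-- A list peeled as `l ++ s` starts with the maximum `M` exactly when `l` does, which forces
`M ∉ s`. -/
lemma topLists_eq_biUnion {V : Finset ℕ} {M : ℕ} (hM : IsGreatest (V : Set ℕ) M)
    {X : Finset (List ℕ)} (hX : ∀ s ∈ X, (V \ s.toFinset).Nonempty)
    (h : lists V = ⋃ s ∈ X, (· ++ s) '' lists (V \ s.toFinset)) :
    topLists V = ⋃ s ∈ X.filter (M ∉ ·), (· ++ s) '' topLists (V \ s.toFinset) := by
  have head_append : ∀ s ∈ X, ∀ l ∈ lists (V \ s.toFinset),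
      l.getD 0 0 ∈ V \ s.toFinset ∧ (l ++ s).getD 0 0 = l.getD 0 0 := by
    intro s hs l hl
    have hpos : 0 < l.length := by rw [length_eq_card hl]; exact (hX s hs).card_pos
    refine ⟨mem_of_mem_lists hl ?_, List.getD_append _ _ _ _ hpos⟩
    exact List.getD_eq_getElem l 0 hpos ▸ List.getElem_mem hpos
  ext l
  simp only [topLists, Set.mem_ofPred_eq, h, Set.mem_iUnion, Set.mem_image, Finset.mem_filter,
    exists_prop]
  constructor
  · rintro ⟨⟨s, hs, l', hl', rfl⟩, hmax⟩
    obtain ⟨hmem, heq⟩ := head_append s hs l' hl'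
    rw [heq] at hmax
    have hM' : l'.getD 0 0 = M := le_antisymm (hM.2 (Finset.mem_sdiff.1 hmem).1) (hmax M hM.1)
    refine ⟨s, ⟨hs, fun hMs => ?_⟩, l', ⟨hl', fun y hy => hmax y (Finset.mem_sdiff.1 hy).1⟩, rfl⟩
    exact (Finset.mem_sdiff.1 hmem).2 (hM' ▸ List.mem_toFinset.2 hMs)
  · rintro ⟨s, ⟨hs, hMs⟩, l', ⟨hl', hmax⟩, rfl⟩
    refine ⟨⟨s, hs, l', hl', rfl⟩, fun y hy => ?_⟩
    rw [(head_append s hs l' hl').2]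
    exact (hM.2 hy).trans (hmax M (Finset.mem_sdiff.2 ⟨hM.1, by simpa using hMs⟩))

lemma filter_oddSuffixes {μ M : ℕ} (hμM : μ ≠ M) (F : Finset ℕ) :
    (oddSuffixes μ F).filter (M ∉ ·) = oddSuffixes μ (F.erase M) := by
  rw [oddSuffixes, oddSuffixes, Finset.filter_image]
  congr 1
  ext x
  simp [Finset.mem_erase, hμM.symm, eq_comm, and_comm]

lemma filter_evenSuffixes {μ M : ℕ} (hμM : μ ≠ M) (F : Finset ℕ) :
    (evenSuffixes μ F).filter (M ∉ ·) = evenSuffixes μ (F.erase M) := by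
  rw [evenSuffixes, evenSuffixes, Finset.filter_insert, if_pos (by simpa using hμM.symm),
    Finset.filter_image, Finset.filter_filter]
  congr 2
  ext p
  simp only [Finset.mem_filter, Finset.mem_product, Finset.mem_erase, List.mem_cons,
    List.not_mem_nil, or_false, not_or]
  constructor
  · rintro ⟨⟨h1, h2⟩, h12, -, h2M, h1M⟩
    exact ⟨⟨⟨Ne.symm h1M, h1⟩, Ne.symm h2M, h2⟩, h12⟩
  · rintro ⟨⟨⟨h1M, h1⟩, h2M, h2⟩, h12⟩
    exact ⟨⟨h1, h2⟩, h12, Ne.symm hμM, Ne.symm h2M, Ne.symm h1M⟩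

lemma ncard_biUnion_oddSuffixes {V F : Finset ℕ} {μ : ℕ} (hμ : μ ∈ V) (hF : F ⊆ V.erase μ)
    {G : Finset ℕ → Set (List ℕ)} (hfin : ∀ W, (G W).Finite) {c : ℕ}
    (hG : ∀ W : Finset ℕ, W.card = V.card - 2 → (G W).ncard = c) :
    (⋃ s ∈ oddSuffixes μ F, (· ++ s) '' G (V \ s.toFinset)).ncard = F.card * c := by
  have hfree : ∀ s ∈ oddSuffixes μ F, ∀ t ∈ oddSuffixes μ F, s <:+ t → s = t := by
    simp only [oddSuffixes, Finset.mem_image]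
    rintro _ ⟨x, -, rfl⟩ _ ⟨y, -, rfl⟩ h
    exact h.eq_of_length rfl
  rw [List.ncard_biUnion_image_append hfree fun s _ => hfin _, oddSuffixes,
    Finset.sum_image fun x _ y _ h => by simpa using h,
    Finset.sum_congr rfl fun x hx => hG _ (card_sdiff_pair_suffix hμ (hF hx)),
    Finset.sum_const, smul_eq_mul]

lemma ncard_biUnion_evenSuffixes {V F : Finset ℕ} {μ : ℕ} (hμ : μ ∈ V) (hF : F ⊆ V.erase μ)
    {G : Finset ℕ → Set (List ℕ)} (hfin : ∀ W, (G W).Finite) {c₁ c₃ : ℕ}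
    (hG₁ : ∀ W : Finset ℕ, W.card = V.card - 1 → (G W).ncard = c₁)
    (hG₃ : ∀ W : Finset ℕ, W.card = V.card - 3 → (G W).ncard = c₃) :
    (⋃ s ∈ evenSuffixes μ F, (· ++ s) '' G (V \ s.toFinset)).ncard =
      c₁ + F.card.choose 2 * c₃ := by
  have hfree : ∀ s ∈ evenSuffixes μ F, ∀ t ∈ evenSuffixes μ F, s <:+ t → s = t := by
    simp only [evenSuffixes, Finset.mem_insert, Finset.mem_image, Finset.mem_filter]
    rintro s (rfl | ⟨p, -, rfl⟩) t (rfl | ⟨q, ⟨hq, -⟩, rfl⟩) h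
    · rfl
    · exact absurd (by simpa [List.suffix_cons_iff] using h)
        (Finset.ne_of_mem_erase (hF (Finset.mem_product.1 hq).1)).symm
    · simpa using h.length_le
    · exact h.eq_of_length rfl
  have hcard₃ : ∀ p ∈ {p ∈ F ×ˢ F | p.1 < p.2}, (V \ [μ, p.2, p.1].toFinset).card = V.card - 3 :=
    fun p hp => by
      simp only [Finset.mem_filter, Finset.mem_product] at hp
      exact card_sdiff_triple_suffix hμ (hF hp.1.2) (hF hp.1.1) hp.2
  rw [List.ncard_biUnion_image_append hfree fun s _ => hfin _, evenSuffixes,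
    Finset.sum_insert (by simp),
    Finset.sum_image fun p _ q _ h => by simpa [Prod.ext_iff, and_comm] using h,
    Finset.sum_congr rfl fun p hp => hG₃ _ (hcard₃ p hp), Finset.sum_const, smul_eq_mul,
    Finset.card_product_filter_lt, hG₁ _ (by simpa using card_sdiff_singleton hμ)]

lemma nonempty_sdiff_of_mem_oddSuffixes {V : Finset ℕ} {μ : ℕ} (hμ : μ ∈ V) (h3 : 3 ≤ V.card)
    {s : List ℕ} (hs : s ∈ oddSuffixes μ (V.erase μ)) : (V \ s.toFinset).Nonempty := by
  obtain ⟨x, hx, rfl⟩ := Finset.mem_image.1 hs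
  exact Finset.card_pos.1 (by rw [card_sdiff_pair_suffix hμ hx]; omega)

theorem ncard_lists_of_odd (m : ℕ) :
    ∀ V : Finset ℕ, V.card = 2 * m + 1 → (lists V).ncard = evenDF m := by
  induction m with
  | zero =>
    intro V hV
    obtain ⟨a, rfl⟩ := Finset.card_eq_one.1 hV
    simp [lists_singleton, evenDF]
  | succ m ih =>
    intro V hV
    have hμ := V.isLeast_min' (Finset.card_pos.1 (by omega))
    rw [lists_eq_biUnion_of_odd hμ ⟨m + 1, hV⟩ (by omega),
      ncard_biUnion_oddSuffixes hμ.1 subset_rfl finite_lists fun W hW => ih W (by omega),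
      Finset.card_erase_of_mem hμ.1, hV, Nat.add_sub_cancel, evenDF_succ]
    ring

theorem ncard_topLists_of_odd (m : ℕ) :
    ∀ V : Finset ℕ, V.card = 2 * m + 1 → (topLists V).ncard = oddDF m := by
  induction m with
  | zero =>
    intro V hV
    obtain ⟨a, rfl⟩ := Finset.card_eq_one.1 hV
    simp [topLists_singleton, oddDF]
  | succ m ih =>
    intro V hV
    have hne : V.Nonempty := Finset.card_pos.1 (by omega)
    have hμ := V.isLeast_min' hne
    have hM := V.isGreatest_max' hne
    have hμM := (V.min'_lt_max'_of_card (by omega)).ne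
    rw [topLists_eq_biUnion hM (fun s => nonempty_sdiff_of_mem_oddSuffixes hμ.1 (by omega))
      (lists_eq_biUnion_of_odd hμ ⟨m + 1, hV⟩ (by omega)),
      filter_oddSuffixes hμM, ncard_biUnion_oddSuffixes hμ.1 (Finset.erase_subset _ _)
        finite_topLists fun W hW => ih W (by omega),
      Finset.card_erase_of_mem (Finset.mem_erase.2 ⟨hμM.symm, hM.1⟩),
      Finset.card_erase_of_mem hμ.1, hV, oddDF_succ]
    rw [show 2 * (m + 1) + 1 - 1 - 1 = 2 * m + 1 by omega]
    ring

lemma nonempty_sdiff_of_mem_evenSuffixes {V : Finset ℕ} {μ : ℕ} (hμ : μ ∈ V) (h4 : 4 ≤ V.card)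
    {s : List ℕ} (hs : s ∈ evenSuffixes μ (V.erase μ)) : (V \ s.toFinset).Nonempty := by
  simp only [evenSuffixes, Finset.mem_insert, Finset.mem_image, Finset.mem_filter,
    Finset.mem_product] at hs
  refine Finset.card_pos.1 ?_
  rcases hs with rfl | ⟨p, ⟨⟨h1, h2⟩, h12⟩, rfl⟩
  · rw [List.toFinset_cons, List.toFinset_nil, insert_empty_eq, card_sdiff_singleton hμ]; omega
  · rw [card_sdiff_triple_suffix hμ h2 h1 h12]; omega

theorem ncard_lists_of_even (k : ℕ) (V : Finset ℕ) (hV : V.card = 2 * k + 4) :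
    (lists V).ncard = evenDF (k + 1) + (2 * k + 3).choose 2 * evenDF k := by
  have hμ := V.isLeast_min' (Finset.card_pos.1 (by omega))
  rw [lists_eq_biUnion_of_even hμ ⟨k + 2, by omega⟩ (by omega),
    ncard_biUnion_evenSuffixes hμ.1 subset_rfl finite_lists
      (fun W hW => ncard_lists_of_odd (k + 1) W (by omega))
      (fun W hW => ncard_lists_of_odd k W (by omega)),
    Finset.card_erase_of_mem hμ.1, hV]
  rfl

theorem ncard_topLists_of_even (k : ℕ) (V : Finset ℕ) (hV : V.card = 2 * k + 4) :
    (topLists V).ncard = oddDF (k + 1) + (2 * k + 2).choose 2 * oddDF k := by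
  have hne : V.Nonempty := Finset.card_pos.1 (by omega)
  have hμ := V.isLeast_min' hne
  have hM := V.isGreatest_max' hne
  have hμM := (V.min'_lt_max'_of_card (by omega)).ne
  rw [topLists_eq_biUnion hM (fun s => nonempty_sdiff_of_mem_evenSuffixes hμ.1 (by omega))
      (lists_eq_biUnion_of_even hμ ⟨k + 2, by omega⟩ (by omega)),
    filter_evenSuffixes hμM, ncard_biUnion_evenSuffixes hμ.1 (Finset.erase_subset _ _)
      finite_topLists (fun W hW => ncard_topLists_of_odd (k + 1) W (by omega))
      (fun W hW => ncard_topLists_of_odd k W (by omega)),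
    Finset.card_erase_of_mem (Finset.mem_erase.2 ⟨hμM.symm, hM.1⟩),
    Finset.card_erase_of_mem hμ.1, hV]
  rfl

end DownUpOddMin

lemma matches1_iff_of_downUp {N : ℕ} {σ : Equiv.Perm (Fin N)} (hσ : DownUp σ) (i : Fin N) :
    Matches1 σ i ↔
      (i.val = 0 ∧ ∃ j, σ i < σ j) ∨ (Odd i.val ∧ i.val + 1 < N ∧ ∀ j < i, σ i < σ j) := by
  constructor
  · rintro ⟨⟨j, hij, hlt⟩, hmin⟩
    push Not at hmin
    by_cases h0 : i.val = 0
    · exact Or.inl ⟨h0, j, hlt⟩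
    refine Or.inr ⟨?_, by have := j.isLt; rw [Fin.lt_def] at hij; omega,
      fun k hk => lt_of_le_of_ne (hmin k hk) fun h => hk.ne (σ.injective h).symm⟩
    -- an even position `i ≥ 2` has a smaller left neighbour
    by_contra hev
    rw [Nat.not_odd_iff_even] at hev
    have hprev := hσ ⟨i.val - 1, by omega⟩ (by simp only; omega)
    have hodd : ¬Even (i.val - 1) :=
      Nat.not_even_iff_odd.2 (Nat.Even.sub_odd (by omega) hev odd_one)
    rw [if_neg hodd] at hprev
    have hi : (⟨i.val - 1 + 1, by omega⟩ : Fin N) = i := Fin.ext (by simp only; omega)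
    rw [hi] at hprev
    exact (hmin _ (by rw [Fin.lt_def]; simp only; omega)).not_gt hprev
  · rintro (⟨h0, j, hlt⟩ | ⟨hodd, hlast, hmin⟩)
    · refine ⟨⟨j, ?_, hlt⟩, fun ⟨k, hk, _⟩ => by rw [Fin.lt_def] at hk; omega⟩
      have hji : j ≠ i := fun h => (h ▸ hlt).false
      rw [Fin.lt_def]
      exact lt_of_le_of_ne (h0 ▸ Nat.zero_le _) (fun h => hji (Fin.ext h.symm))
    · refine ⟨⟨⟨i.val + 1, hlast⟩, by rw [Fin.lt_def]; simp, ?_⟩,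
        fun ⟨k, hk, hlt⟩ => (hmin k hk).not_gt hlt⟩
      have := hσ i hlast
      rwa [if_neg (Nat.not_even_iff_odd.2 hodd)] at this

def mmpCandidates (N : ℕ) : Finset (Fin N) :=
  {i | i.val = 0 ∨ (Odd i.val ∧ i.val + 1 < N)}

lemma card_mmpCandidates (n : ℕ) : (mmpCandidates (2 * n)).card = n := by
  refine (Finset.card_bij (t := Finset.range n) (fun i _ => (i.val + 1) / 2) ?_ ?_ ?_).trans
    (Finset.card_range n)
  · intro i hi
    simp only [mmpCandidates, Finset.mem_filter, Finset.mem_univ, true_and] at hi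
    simp only [Finset.mem_range]
    rcases hi with h | ⟨⟨r, hr⟩, h⟩ <;> omega
  · intro i hi j hj hij
    simp only [mmpCandidates, Finset.mem_filter, Finset.mem_univ, true_and] at hi hj
    apply Fin.ext
    rcases hi with h | ⟨⟨r, hr⟩, h⟩ <;> rcases hj with h' | ⟨⟨r', hr'⟩, h'⟩ <;> omega
  · intro j hj
    simp only [Finset.mem_range] at hj
    refine ⟨⟨2 * j - 1, by omega⟩, ?_, by simp only; omega⟩
    simp only [mmpCandidates, Finset.mem_filter, Finset.mem_univ, true_and]
    rcases Nat.eq_zero_or_pos j with rfl | hj0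
    · exact Or.inl rfl
    · exact Or.inr ⟨⟨j - 1, by omega⟩, by omega⟩

lemma setOf_matches1_subset {N : ℕ} {σ : Equiv.Perm (Fin N)} (hσ : DownUp σ) :
    {i | Matches1 σ i} ⊆ mmpCandidates N := by
  intro i hi
  simp only [mmpCandidates, Finset.coe_filter, Finset.mem_univ, true_and, Set.mem_ofPred_eq]
  rcases (matches1_iff_of_downUp hσ i).1 hi with ⟨h0, -⟩ | ⟨hodd, hlast, -⟩
  · exact Or.inl h0
  · exact Or.inr ⟨hodd, hlast⟩

lemma mmp1_le_of_downUp {n : ℕ} {σ : Equiv.Perm (Fin (2 * n))} (hσ : DownUp σ) : mmp1 σ ≤ n := by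
  simpa [mmp1, card_mmpCandidates] using Set.ncard_le_ncard (setOf_matches1_subset hσ)

lemma mmp1_eq_iff_of_downUp {n : ℕ} {σ : Equiv.Perm (Fin (2 * n))} (hσ : DownUp σ) :
    mmp1 σ = n ↔ ∀ i ∈ mmpCandidates (2 * n), Matches1 σ i := by
  constructor
  · intro h i hi
    have := Set.eq_of_subset_of_ncard_le (setOf_matches1_subset hσ)
      (by simp [card_mmpCandidates, mmp1] at h ⊢; omega)
    exact (this ▸ hi : i ∈ {i | Matches1 σ i})
  · intro h
    rw [mmp1, Set.Subset.antisymm (setOf_matches1_subset hσ) (fun i hi => h i hi),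
      Set.ncard_coe_finset, card_mmpCandidates]

def permList {N : ℕ} (σ : Equiv.Perm (Fin N)) : List ℕ := List.ofFn fun i => (σ i : ℕ)

section permList

variable {N : ℕ}

lemma length_permList (σ : Equiv.Perm (Fin N)) : (permList σ).length = N := List.length_ofFn

lemma getD_permList (σ : Equiv.Perm (Fin N)) {i : ℕ} (hi : i < N) :
    (permList σ).getD i 0 = σ ⟨i, hi⟩ := by
  simp [permList, hi]

lemma permList_injective : Function.Injective (permList (N := N)) := fun σ τ h =>
  Equiv.ext fun i => Fin.ext <| by rw [← getD_permList σ i.isLt, h, getD_permList]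

lemma nodup_permList (σ : Equiv.Perm (Fin N)) : (permList σ).Nodup :=
  List.nodup_ofFn.2 fun _ _ h => σ.injective (Fin.ext h)

lemma toFinset_permList (σ : Equiv.Perm (Fin N)) : (permList σ).toFinset = Finset.range N := by
  ext y
  simp only [permList, List.mem_toFinset, List.mem_ofFn, Finset.mem_range]
  exact ⟨fun ⟨i, hi⟩ => hi ▸ (σ i).isLt, fun hy => ⟨σ.symm ⟨y, hy⟩, by simp⟩⟩

lemma exists_permList_eq {l : List ℕ} (hl : l.Nodup) (hV : l.toFinset = Finset.range N) :
    ∃ σ : Equiv.Perm (Fin N), permList σ = l := by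
  have hlen : l.length = N := by rw [← List.toFinset_card_of_nodup hl, hV, Finset.card_range]
  have hmem : ∀ i : Fin N, l.getD i 0 < N := fun i => by
    rw [← Finset.mem_range, ← hV, List.mem_toFinset, List.getD_eq_getElem _ _ (by omega)]
    exact List.getElem_mem _
  let f : Fin N → Fin N := fun i => ⟨l.getD i 0, hmem i⟩
  have hf : Function.Injective f := fun i j h => by
    have h : l.getD i 0 = l.getD j 0 := congrArg Fin.val h
    rw [List.getD_eq_getElem _ _ (by omega), List.getD_eq_getElem _ _ (by omega)] at h
    exact Fin.ext (hl.getElem_inj_iff.1 h)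
  refine ⟨Equiv.ofBijective f (Finite.injective_iff_bijective.1 hf), ?_⟩
  refine List.ext_getElem (by rw [length_permList, hlen]) fun i h₁ h₂ => ?_
  rw [← List.getD_eq_getElem _ 0, ← List.getD_eq_getElem _ 0, getD_permList _ (by omega)]
  rfl

lemma isDownUpList_permList (σ : Equiv.Perm (Fin N)) : IsDownUpList (permList σ) ↔ DownUp σ := by
  simp only [IsDownUpList, DownUp, length_permList]
  constructor
  · intro h i hi
    simpa only [getD_permList σ hi, getD_permList σ i.isLt, Fin.val_fin_lt, Fin.eta] using h i hi
  · intro h i hi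
    simpa only [getD_permList σ hi, getD_permList σ (Nat.lt_of_succ_lt hi), Fin.val_fin_lt]
      using h ⟨i, by omega⟩ hi

lemma hasLRMinAtOdd_permList (σ : Equiv.Perm (Fin N)) :
    HasLRMinAtOdd (permList σ) ↔ ∀ j : Fin N, Odd j.val → j.val + 1 < N → ∀ i < j, σ j < σ i := by
  simp only [HasLRMinAtOdd, length_permList]
  constructor
  · intro h j hj hjN i hij
    simpa only [getD_permList σ j.isLt, getD_permList σ i.isLt, Fin.val_fin_lt, Fin.eta]
      using h j hj hjN i hij
  · intro h j hj hjN i hij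
    simpa only [getD_permList σ (Nat.lt_of_succ_lt hjN),
      getD_permList σ (hij.trans (Nat.lt_of_succ_lt hjN)), Fin.val_fin_lt]
      using h ⟨j, by omega⟩ hj hjN ⟨i, by omega⟩ hij

end permList

lemma downUp_and_mmp1_eq_iff {n : ℕ} (hn : 1 ≤ n) (σ : Equiv.Perm (Fin (2 * n))) :
    DownUp σ ∧ mmp1 σ = n ↔ permList σ ∈
      DownUpOddMin.lists (Finset.range (2 * n)) \ DownUpOddMin.topLists (Finset.range (2 * n)) := by
  have h0 : 0 < 2 * n := by omega
  simp only [Set.mem_sdiff, DownUpOddMin.topLists, DownUpOddMin.lists, Set.mem_ofPred_eq,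
    nodup_permList, toFinset_permList, true_and, DownUpOddMin, isDownUpList_permList,
    hasLRMinAtOdd_permList, getD_permList σ h0, Finset.mem_range, not_and, not_forall, not_le,
    exists_prop]
  constructor
  · rintro ⟨hσ, hm⟩
    have hall := (mmp1_eq_iff_of_downUp hσ).1 hm
    refine ⟨⟨hσ, fun j hj hjN i hij => ?_⟩, fun _ => ?_⟩
    · rcases (matches1_iff_of_downUp hσ j).1 (hall j (by simp [mmpCandidates, hj, hjN])) with
        ⟨h, -⟩ | ⟨-, -, h⟩
      · exact absurd (h ▸ hj) Nat.not_odd_zero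
      · exact h i hij
    · rcases (matches1_iff_of_downUp hσ _).1 (hall ⟨0, h0⟩ (by simp [mmpCandidates])) with
        ⟨-, j, hj⟩ | ⟨h, -⟩
      · exact ⟨σ j, (σ j).isLt, hj⟩
      · exact absurd h Nat.not_odd_zero
  · rintro ⟨⟨hσ, hodd⟩, htop⟩
    refine ⟨hσ, (mmp1_eq_iff_of_downUp hσ).2 fun i hi => (matches1_iff_of_downUp hσ i).2 ?_⟩
    simp only [mmpCandidates, Finset.mem_filter, Finset.mem_univ, true_and] at hi
    rcases hi with hi | ⟨hi, hiN⟩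
    · obtain ⟨y, hy, hlt⟩ := htop ⟨hσ, hodd⟩
      obtain rfl : i = ⟨0, h0⟩ := Fin.ext hi
      exact Or.inl ⟨hi, σ.symm ⟨y, hy⟩, by simpa [Fin.lt_def] using hlt⟩
    · exact Or.inr ⟨hi, hiN, hodd i hi hiN⟩

theorem ncard_setOf_downUp_mmp1_eq {n : ℕ} (hn : 1 ≤ n) :
    {σ : Equiv.Perm (Fin (2 * n)) | DownUp σ ∧ mmp1 σ = n}.ncard =
      (DownUpOddMin.lists (Finset.range (2 * n))).ncard -
        (DownUpOddMin.topLists (Finset.range (2 * n))).ncard := by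
  have hpre : {σ : Equiv.Perm (Fin (2 * n)) | DownUp σ ∧ mmp1 σ = n} = permList ⁻¹'
      (DownUpOddMin.lists (Finset.range (2 * n)) \ DownUpOddMin.topLists (Finset.range (2 * n))) :=
    Set.ext (downUp_and_mmp1_eq_iff hn)
  rw [hpre, Set.ncard_preimage_of_injective_subset_range permList_injective
    fun l hl => exists_permList_eq hl.1.1 hl.1.2.1, Set.ncard_sdiff (fun l hl => hl.1)
    (DownUpOddMin.finite_topLists _)]

/-- Here `(2n−4)!! = evenDF (n−2)` and `(2n−3)!! = oddDF (n−1)`. -/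
theorem stmt13 (n : ℕ) (hn : 2 ≤ n) :
    (∀ σ : Equiv.Perm (Fin (2*n)), DownUp σ → mmp1 σ ≤ n) ∧
    ({σ : Equiv.Perm (Fin (2*n)) | DownUp σ ∧ mmp1 σ = n}.ncard : ℤ)
      = (2*(n:ℤ)^2 - n - 1) * (evenDF (n-2) : ℤ) - (n : ℤ) * (oddDF (n-1) : ℤ) := by
  refine ⟨fun σ hσ => mmp1_le_of_downUp hσ, ?_⟩
  obtain ⟨k, rfl⟩ : ∃ k, n = k + 2 := ⟨n - 2, by omega⟩
  have hV : (Finset.range (2 * (k + 2))).card = 2 * k + 4 := by simp; ring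
  have hle := Set.ncard_le_ncard (fun l (hl : l ∈ DownUpOddMin.topLists _) => hl.1)
    (DownUpOddMin.finite_lists (Finset.range (2 * (k + 2))))
  have hc₃ : (2 * k + 3).choose 2 = (2 * k + 3) * (k + 1) := by
    rw [Nat.choose_two_right, show 2 * k + 3 - 1 = 2 * (k + 1) by omega, Nat.mul_left_comm,
      Nat.mul_div_cancel_left _ two_pos]
  have hc₂ : (2 * k + 2).choose 2 = (k + 1) * (2 * k + 1) := by
    rw [Nat.choose_two_right, show 2 * k + 2 = 2 * (k + 1) by ring, Nat.mul_assoc,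
      Nat.mul_div_cancel_left _ two_pos, show 2 * (k + 1) - 1 = 2 * k + 1 by omega]
  rw [ncard_setOf_downUp_mmp1_eq (by omega), Nat.cast_sub hle,
    DownUpOddMin.ncard_lists_of_even k _ hV, DownUpOddMin.ncard_topLists_of_even k _ hV, hc₃, hc₂,
    evenDF_succ, oddDF_succ, Nat.add_sub_cancel, show k + 2 - 1 = k + 1 from rfl, oddDF_succ]
  push_cast
  ring
end

section
/- For every n ≥ 1: every down-up permutation σ = σ_1…σ_{2n+1} of length 2n+1 satisfies mmp^{(1,0,∅,0)}(σ) + χ(σ_1 = 2n+1) ≤ n+1, and the number of down-up permutations σ of length 2n+1 with mmp^{(1,0,∅,0)}(σ) + χ(σ_1 = 2n+1) = n+1 equals (2n)!!. (Equivalently, the highest power of x appearing in D̄^{(1,0,∅,0)}_{2n+1}(x) is x^{n+1}, with coefficient (2n)!!.) -/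
/-- The statistic `mmp^{(1,0,∅,0)}(σ) + χ(σ_1 = 2n+1)` on permutations of length `2n+1`:
the indicator adds 1 when the first entry is the largest value `2n+1`
(i.e. `2*n` as an element of `Fin (2n+1)`). -/
noncomputable def dbarStat (n : ℕ) (σ : Equiv.Perm (Fin (2*n+1))) : ℕ :=
  mmp1 σ + if (σ ⟨0, by omega⟩).val = 2*n then 1 else 0

open Equiv

def oddRecords {N : ℕ} (σ : Perm (Fin N)) : Set (Fin N) :=
  {i | Odd (i : ℕ) ∧ ∀ j < i, σ i < σ j}

lemma ncard_setOf_odd (n : ℕ) : {i : Fin (2 * n + 1) | Odd (i : ℕ)}.ncard = n := by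
  have hrange : {i : Fin (2 * n + 1) | Odd (i : ℕ)} =
      Set.range fun k : Fin n ↦ (⟨2 * k + 1, by omega⟩ : Fin (2 * n + 1)) := by
    ext i
    simp only [Set.mem_ofPred_eq, Set.mem_range, Fin.ext_iff]
    exact ⟨fun ⟨r, hr⟩ ↦ ⟨⟨r, by omega⟩, hr.symm⟩, fun ⟨k, hk⟩ ↦ ⟨k, hk.symm⟩⟩
  rw [hrange, Set.ncard_range_of_injective fun a b hab ↦ by simp [Fin.ext_iff] at hab; omega,
    Nat.card_fin]

lemma oddRecords_subset {N : ℕ} (σ : Perm (Fin N)) : oddRecords σ ⊆ {i | Odd (i : ℕ)} :=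
  fun _ hi ↦ hi.1

lemma ncard_oddRecords_le {n : ℕ} (σ : Perm (Fin (2 * n + 1))) : (oddRecords σ).ncard ≤ n :=
  (Set.ncard_le_ncard (oddRecords_subset σ)).trans_eq (ncard_setOf_odd n)

lemma ncard_oddRecords_eq_iff {n : ℕ} (σ : Perm (Fin (2 * n + 1))) :
    (oddRecords σ).ncard = n ↔ ∀ i : Fin (2 * n + 1), Odd (i : ℕ) → ∀ j < i, σ i < σ j := by
  refine ⟨fun h i hi ↦ ?_, fun h ↦ ?_⟩
  · have heq := Set.eq_of_subset_of_ncard_le (oddRecords_subset σ) (by rw [h, ncard_setOf_odd])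
    exact (heq ▸ hi : i ∈ oddRecords σ).2
  · rw [(oddRecords_subset σ).antisymm fun i hi ↦ ⟨hi, h i hi⟩, ncard_setOf_odd]

lemma matches1_zero_iff {k : ℕ} (σ : Perm (Fin (k + 1))) : Matches1 σ 0 ↔ σ 0 ≠ Fin.last k := by
  refine ⟨fun ⟨⟨j, _, hj⟩, _⟩ htop ↦ ?_, fun htop ↦ ⟨⟨σ.symm (Fin.last k), ?_, ?_⟩, ?_⟩⟩
  · exact (htop ▸ hj).not_ge (Fin.le_last _)
  · exact Fin.pos_iff_ne_zero.mpr fun h ↦ htop (by rw [← h, apply_symm_apply])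
  · simpa using Fin.lt_last_iff_ne_last.mpr htop
  · rintro ⟨j, hj, _⟩
    exact (Fin.zero_le j).not_gt hj

section DownUp

variable {N : ℕ} {σ : Perm (Fin N)}

lemma DownUp.lt_succ_of_odd (hσ : DownUp σ) {i : Fin N} (hi : Odd (i : ℕ)) (hN : (i : ℕ) + 1 < N) :
    σ i < σ ⟨i + 1, hN⟩ := by
  simpa [Nat.not_even_iff_odd.mpr hi] using hσ i hN

lemma DownUp.matches1_iff_of_odd (hσ : DownUp σ) {i : Fin N} (hi : Odd (i : ℕ))
    (hN : (i : ℕ) + 1 < N) :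
    Matches1 σ i ↔ ∀ j < i, σ i < σ j := by
  refine ⟨fun ⟨_, hmin⟩ j hj ↦ ?_,
    fun h ↦ ⟨⟨_, Fin.lt_def.mpr (by simp), hσ.lt_succ_of_odd hi hN⟩, ?_⟩⟩
  · exact (not_lt.mp fun h ↦ hmin ⟨j, hj, h⟩).lt_of_ne (σ.injective.ne hj.ne')
  · rintro ⟨j, hj, hlt⟩
    exact (h j hj).not_gt hlt

lemma DownUp.not_matches1_of_even (hσ : DownUp σ) {i : Fin N} (hi : Even (i : ℕ))
    (h0 : (i : ℕ) ≠ 0) : ¬Matches1 σ i := by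
  rintro ⟨_, hmin⟩
  obtain ⟨r, hr⟩ := hi
  have hdown := hσ ⟨i - 1, by omega⟩ (by simp; omega)
  have hprev : (⟨i - 1 + 1, by omega⟩ : Fin N) = i := by ext; simp; omega
  rw [if_neg (by simp [Nat.even_iff]; omega), hprev] at hdown
  exact hmin ⟨_, Fin.lt_def.mpr (by simp; omega), hdown⟩

end DownUp

lemma DownUp.matches1_iff {n : ℕ} {σ : Perm (Fin (2 * n + 1))} (hσ : DownUp σ)
    (i : Fin (2 * n + 1)) :
    Matches1 σ i ↔ i ∈ oddRecords σ ∨ i = 0 ∧ σ 0 ≠ Fin.last (2 * n) := by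
  rcases Nat.even_or_odd i with hi | hi
  · have hnot : i ∉ oddRecords σ := fun h ↦ Nat.not_odd_iff_even.mpr hi h.1
    by_cases h0 : i = 0
    · subst h0
      simp [matches1_zero_iff, hnot]
    · simp [hσ.not_matches1_of_even hi (Fin.val_ne_zero_iff.mpr h0), hnot, h0]
  · have hN : (i : ℕ) + 1 < 2 * n + 1 := by obtain ⟨r, hr⟩ := hi; omega
    have h0 : i ≠ 0 := fun h ↦ by simp [h] at hi
    simp [hσ.matches1_iff_of_odd hi hN, oddRecords, hi, h0]

lemma DownUp.dbarStat_eq {n : ℕ} {σ : Perm (Fin (2 * n + 1))} (hσ : DownUp σ) :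
    dbarStat n σ = (oddRecords σ).ncard + 1 := by
  have h0 : (0 : Fin (2 * n + 1)) ∉ oddRecords σ := fun h ↦ by simpa using h.1
  have htop : (σ ⟨0, by omega⟩).val = 2 * n ↔ σ 0 = Fin.last (2 * n) := by simp [Fin.ext_iff]
  unfold dbarStat mmp1
  by_cases hmax : σ 0 = Fin.last (2 * n)
  · have hset : {i | Matches1 σ i} = oddRecords σ := by ext i; simp [hσ.matches1_iff, hmax]
    rw [hset, if_pos (htop.mpr hmax)]
  · have hset : {i | Matches1 σ i} = insert 0 (oddRecords σ) := by
      ext i; simp [hσ.matches1_iff, hmax, or_comm]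
    rw [hset, if_neg (htop.not.mpr hmax), Set.ncard_insert_of_notMem h0]

def OddPrefixMin {k : ℕ} (σ : Perm (Fin k)) : Prop :=
  ∀ i j : Fin k, Odd (i : ℕ) → (j : ℕ) ≤ i + 1 → j ≠ i → σ i < σ j

lemma downUp_and_oddRecords_iff {N : ℕ} (σ : Perm (Fin N)) :
    (DownUp σ ∧ ∀ i : Fin N, Odd (i : ℕ) → ∀ j < i, σ i < σ j) ↔ OddPrefixMin σ := by
  refine ⟨fun ⟨hσ, hrec⟩ i j hi hji hne ↦ ?_, fun h ↦ ⟨fun i hN ↦ ?_, fun i hi j hj ↦ ?_⟩⟩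
  · rcases lt_or_gt_of_ne hne with hj | hj
    · exact hrec i hi j hj
    · have hN : (i : ℕ) + 1 < N := by have := Fin.lt_def.mp hj; omega
      have hup := hσ.lt_succ_of_odd hi hN
      rwa [show (⟨i + 1, hN⟩ : Fin N) = j by ext; have := Fin.lt_def.mp hj; simp; omega] at hup
  · split_ifs with hi
    · exact h ⟨i + 1, hN⟩ i (by simpa using hi.add_one) (by simp; omega) (by simp [Fin.ext_iff])
    · exact h i ⟨i + 1, hN⟩ (Nat.not_even_iff_odd.mp hi) (by simp) (by simp [Fin.ext_iff])
  · exact h i j hi (by have := Fin.lt_def.mp hj; omega) hj.ne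

section PermSnoc

variable {k : ℕ}

-- The permutation ending in `p` whose first `k` entries are in the same relative order as `τ`.
def permSnoc (p : Fin (k + 1)) (τ : Perm (Fin k)) : Perm (Fin (k + 1)) :=
  finSuccEquivLast.trans ((optionCongr τ).trans (finSuccEquiv' p).symm)

@[simp]
lemma permSnoc_castSucc (p : Fin (k + 1)) (τ : Perm (Fin k)) (i : Fin k) :
    permSnoc p τ i.castSucc = p.succAbove (τ i) := by
  simp [permSnoc, finSuccEquivLast_castSucc, finSuccEquiv'_symm_some]

@[simp]
lemma permSnoc_last (p : Fin (k + 1)) (τ : Perm (Fin k)) : permSnoc p τ (Fin.last k) = p := by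
  simp [permSnoc, finSuccEquivLast_last, finSuccEquiv'_symm_none]

lemma permSnoc_injective :
    Function.Injective fun x : Fin (k + 1) × Perm (Fin k) ↦ permSnoc x.1 x.2 := by
  rintro ⟨p, τ⟩ ⟨q, ρ⟩ h
  have hpq : p = q := by simpa using congr($h (Fin.last k))
  subst hpq
  have hτρ : τ = ρ :=
    Equiv.ext fun i ↦ p.succAbove_right_injective (by simpa using congr($h i.castSucc))
  rw [hτρ]

lemma permSnoc_surjective :
    Function.Surjective fun x : Fin (k + 1) × Perm (Fin k) ↦ permSnoc x.1 x.2 := by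
  refine ((Fintype.bijective_iff_injective_and_card _).mpr ⟨permSnoc_injective, ?_⟩).2
  simp [Fintype.card_perm, Nat.factorial_succ]

lemma ncard_setOf_permSnoc {P : Perm (Fin (k + 1)) → Prop} {Q : Perm (Fin k) → Prop}
    {s : Set (Fin (k + 1))} (h : ∀ p τ, P (permSnoc p τ) ↔ Q τ ∧ p ∈ s) :
    {σ | P σ}.ncard = s.ncard * {τ | Q τ}.ncard := by
  have himage : {σ | P σ} = (fun x ↦ permSnoc x.1 x.2) '' (s ×ˢ {τ | Q τ}) := by
    ext σ
    obtain ⟨⟨p, τ⟩, rfl⟩ := permSnoc_surjective σ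
    rw [permSnoc_injective.mem_set_image]
    simp [h, and_comm]
  rw [himage, Set.ncard_image_of_injective _ permSnoc_injective, Set.ncard_prod]

end PermSnoc

section OddPrefixMin

variable {k : ℕ}

lemma oddPrefixMin_permSnoc_iff (p : Fin (k + 1)) (τ : Perm (Fin k)) :
    OddPrefixMin (permSnoc p τ) ↔ OddPrefixMin τ ∧
      (∀ i : Fin k, Odd (i : ℕ) → k ≤ i + 1 → p.succAbove (τ i) < p) ∧
      (Odd k → ∀ j, p < p.succAbove (τ j)) := by
  refine ⟨fun h ↦ ⟨fun i j hi hji hne ↦ ?_, fun i hi hk ↦ ?_, fun hk j ↦ ?_⟩, ?_⟩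
  · simpa [Fin.succAbove_lt_succAbove_iff] using
      h i.castSucc j.castSucc (by simpa using hi) (by simpa using hji) (by simpa using hne)
  · simpa using h i.castSucc (Fin.last k) (by simpa using hi) (by simpa using hk)
      (Fin.castSucc_lt_last i).ne'
  · simpa using h (Fin.last k) j.castSucc (by simpa using hk) (by simp; omega)
      (Fin.castSucc_lt_last j).ne
  · rintro ⟨hτ, hlast, hodd⟩ i j hi hji hne
    induction i using Fin.lastCases with
    | last =>
      induction j using Fin.lastCases with
      | last => exact absurd rfl hne
      | cast j => simpa using hodd (by simpa using hi) j
    | cast i =>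
      induction j using Fin.lastCases with
      | last => simpa using hlast i (by simpa using hi) (by simpa using hji)
      | cast j =>
        simpa [Fin.succAbove_lt_succAbove_iff] using
          hτ i j (by simpa using hi) (by simpa using hji) (by simpa using hne)

lemma OddPrefixMin.apply_last_eq_zero {τ : Perm (Fin (k + 1))} (hτ : OddPrefixMin τ) (hk : Odd k) :
    τ (Fin.last k) = 0 := by
  by_contra hne
  have hj : τ.symm 0 ≠ Fin.last k := fun h ↦ hne (by rw [← h, apply_symm_apply])
  have := hτ (Fin.last k) (τ.symm 0) (by simpa using hk) (by simp) hj
  simp at this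

lemma oddPrefixMin_permSnoc_iff_of_odd {m : ℕ} (p : Fin (2 * m + 2)) (τ : Perm (Fin (2 * m + 1))) :
    OddPrefixMin (permSnoc p τ) ↔ OddPrefixMin τ ∧ p = 0 := by
  have hnone (i : Fin (2 * m + 1)) (hi : Odd (i : ℕ)) (hk : 2 * m + 1 ≤ i + 1) : False := by
    obtain ⟨r, hr⟩ := hi; omega
  have hmin : (∀ j, p < p.succAbove (τ j)) ↔ p = 0 := by
    rw [τ.forall_congr_right (q := fun x ↦ p < p.succAbove x)]
    simp only [Fin.lt_succAbove_iff_le_castSucc]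
    refine ⟨fun h ↦ ?_, fun h x ↦ h ▸ Fin.zero_le _⟩
    simpa using h 0
  rw [oddPrefixMin_permSnoc_iff]
  simp only [show Odd (2 * m + 1) from odd_two_mul_add_one m, true_imp_iff, hmin]
  exact ⟨fun h ↦ ⟨h.1, h.2.2⟩, fun h ↦ ⟨h.1, fun i hi hk ↦ (hnone i hi hk).elim, h.2⟩⟩

lemma oddPrefixMin_permSnoc_iff_of_even {m : ℕ} (p : Fin (2 * m + 3)) (τ : Perm (Fin (2 * m + 2))) :
    OddPrefixMin (permSnoc p τ) ↔ OddPrefixMin τ ∧ p ≠ 0 := by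
  have heven : ¬Odd (2 * m + 2) := by rw [Nat.not_odd_iff_even]; exact ⟨m + 1, by ring⟩
  have hlast (i : Fin (2 * m + 2)) (hk : 2 * m + 2 ≤ i + 1) : i = Fin.last _ := by ext; simp; omega
  rw [oddPrefixMin_permSnoc_iff]
  simp only [heven, false_imp_iff, and_true]
  refine and_congr_right fun hτ ↦ ⟨fun h ↦ ?_, fun hp i _ hk ↦ ?_⟩
  · have := h (Fin.last _) (by simp) (by simp)
    rw [hτ.apply_last_eq_zero (odd_two_mul_add_one m), Fin.succAbove_lt_iff_castSucc_lt] at this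
    exact (Fin.pos_iff_ne_zero' p).mp this
  · rw [hlast i hk, hτ.apply_last_eq_zero (odd_two_mul_add_one m), Fin.succAbove_lt_iff_castSucc_lt]
    exact (Fin.pos_iff_ne_zero' p).mpr hp

end OddPrefixMin

lemma ncard_setOf_oddPrefixMin (n : ℕ) :
    {σ : Perm (Fin (2 * n + 1)) | OddPrefixMin σ}.ncard = evenDF n := by
  induction n with
  | zero =>
    have : {σ : Perm (Fin 1) | OddPrefixMin σ} = Set.univ :=
      Set.eq_univ_of_forall fun σ i j hi ↦ by obtain ⟨r, hr⟩ := hi; omega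
    simp [this, evenDF]
  | succ m ih =>
    have hcount : {σ : Perm (Fin (2 * m + 3)) | OddPrefixMin σ}.ncard = (2 * m + 2) * evenDF m := by
      rw [ncard_setOf_permSnoc (s := {0}ᶜ) (by simpa using oddPrefixMin_permSnoc_iff_of_even),
        ncard_setOf_permSnoc (s := {0}) (by simpa using oddPrefixMin_permSnoc_iff_of_odd), ih]
      rw [Set.ncard_compl, Nat.card_fin]
      simp
    rw [evenDF, Finset.prod_range_succ, ← evenDF]
    exact hcount.trans (mul_comm _ _)

theorem stmt15_general (n : ℕ) :
    (∀ σ : Equiv.Perm (Fin (2*n+1)), DownUp σ → dbarStat n σ ≤ n+1) ∧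
    {σ : Equiv.Perm (Fin (2*n+1)) | DownUp σ ∧ dbarStat n σ = n+1}.ncard = evenDF n := by
  refine ⟨fun σ hσ ↦ hσ.dbarStat_eq ▸ Nat.add_le_add_right (ncard_oddRecords_le σ) 1, ?_⟩
  have hset : {σ : Perm (Fin (2 * n + 1)) | DownUp σ ∧ dbarStat n σ = n + 1} =
      {σ | OddPrefixMin σ} := by
    ext σ
    simp only [Set.mem_ofPred_eq, ← downUp_and_oddRecords_iff, ← ncard_oddRecords_eq_iff]
    exact and_congr_right fun hσ ↦ by rw [hσ.dbarStat_eq, Nat.add_right_cancel_iff]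
  rw [hset, ncard_setOf_oddPrefixMin]

theorem stmt15 (n : ℕ) (hn : 1 ≤ n) :
    (∀ σ : Equiv.Perm (Fin (2*n+1)), DownUp σ → dbarStat n σ ≤ n+1) ∧
    {σ : Equiv.Perm (Fin (2*n+1)) | DownUp σ ∧ dbarStat n σ = n+1}.ncard = evenDF n :=
  stmt15_general n
end
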